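/- Let ξ = (1/2)·(3 − 3·(2√7 − 1)^{−1/3} + (2√7 − 1)^{1/3}), let p(ξ) and q(ξ) be the explicit polynomials p(ξ) = 87016 − 379693ξ + 739050ξ² − 974082ξ³ + 1042548ξ⁴ − 898707ξ⁵ + 559890ξ⁶ − 214548ξ⁷ + 22208ξ⁸ + 25957ξ⁹ − 15538ξ¹⁰ + 3670ξ¹¹ + 100ξ¹² − 229ξ¹³ + 54ξ¹⁴ and q(ξ) = −3760 − 127707ξ + 448476ξ² − 659689ξ³ + 526682ξ⁴ − 230882ξ⁵ + 32188ξ⁶ + 23322ξ⁷ − 14544ξ⁸ + 3149ξ⁹ + 280ξ¹⁰ − 257ξ¹¹ + 54ξ¹², and let r(ξ) = 64·(ξ² − 3ξ + 5)·(ξ² − 3ξ + 6)·(ξ² − 6ξ + 11 + √(ξ⁴ − 1))·(ξ³ − ξ² + ξ − 1 + ξ·√(ξ⁴ − 1))²·√(ξ·(3 − ξ)). Then r(ξ) > 0 and the number b₃,₀,∞ := −(1 + ξ²)·(p(ξ) + q(ξ)·√(ξ⁴ − 1))/r(ξ) is strictly negative. -/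

import Mathlib

noncomputable def ξ : ℝ :=
  (1 / 2) * (3 - 3 * (2 * Real.sqrt 7 - 1) ^ (-(1 : ℝ) / 3)
    + (2 * Real.sqrt 7 - 1) ^ ((1 : ℝ) / 3))

def p (x : ℝ) : ℝ :=
  87016 - 379693 * x + 739050 * x ^ 2 - 974082 * x ^ 3 + 1042548 * x ^ 4
    - 898707 * x ^ 5 + 559890 * x ^ 6 - 214548 * x ^ 7 + 22208 * x ^ 8
    + 25957 * x ^ 9 - 15538 * x ^ 10 + 3670 * x ^ 11 + 100 * x ^ 12
    - 229 * x ^ 13 + 54 * x ^ 14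

def q (x : ℝ) : ℝ :=
  -3760 - 127707 * x + 448476 * x ^ 2 - 659689 * x ^ 3 + 526682 * x ^ 4
    - 230882 * x ^ 5 + 32188 * x ^ 6 + 23322 * x ^ 7 - 14544 * x ^ 8
    + 3149 * x ^ 9 + 280 * x ^ 10 - 257 * x ^ 11 + 54 * x ^ 12

noncomputable def r (x : ℝ) : ℝ :=
  64 * (x ^ 2 - 3 * x + 5) * (x ^ 2 - 3 * x + 6)
    * (x ^ 2 - 6 * x + 11 + Real.sqrt (x ^ 4 - 1))
    * (x ^ 3 - x ^ 2 + x - 1 + x * Real.sqrt (x ^ 4 - 1)) ^ 2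
    * Real.sqrt (x * (3 - x))

lemma xi_root : 2 * ξ ^ 3 - 9 * ξ ^ 2 + 18 * ξ - 13 = 0 := by
  have hs : Real.sqrt 7 ^ 2 = 7 := Real.sq_sqrt (by norm_num)
  have hs2 : (2 : ℝ) ≤ Real.sqrt 7 := by
    nlinarith [Real.sqrt_nonneg 7, hs]
  have h1 : (0 : ℝ) < 2 * Real.sqrt 7 - 1 := by linarith
  set t := (2 * Real.sqrt 7 - 1) ^ ((1 : ℝ) / 3) with ht_def
  have ht0 : 0 < t := Real.rpow_pos_of_pos h1 _
  have ht : t ^ 3 = 2 * Real.sqrt 7 - 1 := by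
    rw [ht_def, ← Real.rpow_natCast ((2 * Real.sqrt 7 - 1) ^ ((1 : ℝ) / 3)) 3,
      ← Real.rpow_mul h1.le]
    norm_num
  have hneg : (2 * Real.sqrt 7 - 1) ^ (-(1 : ℝ) / 3) = t⁻¹ := by
    rw [ht_def, ← Real.rpow_neg h1.le]
    norm_num
  have hξ : ξ = (1 / 2) * (3 - 3 * t⁻¹ + t) := by
    rw [ξ, hneg]
  rw [hξ]
  have h3 : t ≠ 0 := ht0.ne'
  field_simp
  linear_combination (t ^ 3 + (2 * Real.sqrt 7 - 1) + 2) * ht + 4 * hs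

lemma xi_lb : (1389 : ℝ) / 1000 < ξ := by
  by_contra hc
  push_neg at hc
  have hg : (0 : ℝ) < 2 * ξ ^ 2 - (6222 / 1000) * ξ + 9357842 / 1000000 := by
    nlinarith [sq_nonneg (ξ - 15555 / 10000)]
  have hP : 0 ≤ (1389 / 1000 - ξ) * (2 * ξ ^ 2 - (6222 / 1000) * ξ + 9357842 / 1000000) :=
    mul_nonneg (by linarith) hg.le
  nlinarith [xi_root, hP]

lemma xi_ub : ξ < (1390 : ℝ) / 1000 := by
  by_contra hc
  push_neg at hc
  have hg : (0 : ℝ) < 2 * ξ ^ 2 - (622 / 100) * ξ + 93542 / 10000 := by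
    nlinarith [sq_nonneg (ξ - 1555 / 1000)]
  have hP : 0 ≤ (ξ - 1390 / 1000) * (2 * ξ ^ 2 - (622 / 100) * ξ + 93542 / 10000) :=
    mul_nonneg (by linarith) hg.le
  nlinarith [xi_root, hP]

lemma p_pos : 0 < p ξ := by
  have h := xi_root
  have hp : p ξ = (116496775 - 195151480 * ξ + 86620555 * ξ ^ 2) / 1024 := by
    rw [p]
    linear_combination (2107107 / 1024 + 8907003 / 512 * ξ - 7086125 / 256 * ξ ^ 2
      + 3184107 / 128 * ξ ^ 3 - 1530429 / 64 * ξ ^ 4 + 465307 / 32 * ξ ^ 5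
      - 40845 / 16 * ξ ^ 6 - 6213 / 8 * ξ ^ 7 + 4883 / 4 * ξ ^ 8 - 323 / 2 * ξ ^ 9
      + 7 * ξ ^ 10 + 27 * ξ ^ 11) * h
  rw [hp]
  have h1 := xi_lb
  have h2 := xi_ub
  nlinarith [mul_pos (sub_pos.mpr h1) (sub_pos.mpr h2)]

lemma q_pos : 0 < q ξ := by
  have h := xi_root
  have hq : q ξ = (-10176037 + 13212648 * ξ - 3358193 * ξ ^ 2) / 256 := by
    rw [q]
    linear_combination (-708729 / 256 + 1274943 / 128 * ξ - 1267145 / 64 * ξ ^ 2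
      + 512303 / 32 * ξ ^ 3 - 49721 / 16 * ξ ^ 4 - 5377 / 8 * ξ ^ 5
      + 4831 / 4 * ξ ^ 6 - 269 / 2 * ξ ^ 7 - 7 * ξ ^ 8 + 27 * ξ ^ 9) * h
  rw [hq]
  have h1 := xi_lb
  have h2 := xi_ub
  nlinarith [mul_pos (sub_pos.mpr h1) (sub_pos.mpr h2)]

lemma r_pos : 0 < r ξ := by
  have h1 := xi_lb
  have h2 := xi_ub
  have hw : 0 ≤ Real.sqrt (ξ ^ 4 - 1) := Real.sqrt_nonneg _
  have f1 : (0 : ℝ) < ξ ^ 2 - 3 * ξ + 5 := by nlinarith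
  have f2 : (0 : ℝ) < ξ ^ 2 - 3 * ξ + 6 := by nlinarith
  have f3 : (0 : ℝ) < ξ ^ 2 - 6 * ξ + 11 + Real.sqrt (ξ ^ 4 - 1) := by nlinarith
  have f4 : (0 : ℝ) < ξ ^ 3 - ξ ^ 2 + ξ - 1 + ξ * Real.sqrt (ξ ^ 4 - 1) := by
    nlinarith [mul_nonneg (by nlinarith : (0:ℝ) ≤ ξ) hw]
  have f5 : (0 : ℝ) < Real.sqrt (ξ * (3 - ξ)) := by
    apply Real.sqrt_pos.mpr
    nlinarith
  rw [r]
  positivity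

/-- `r(ξ) > 0` and the infinite-depth coefficient
`b₃,₀,∞ = −(1+ξ²)(p(ξ) + q(ξ)√(ξ⁴−1))/r(ξ)` is strictly negative. -/
theorem stmt16 :
    0 < r ξ ∧
    -((1 + ξ ^ 2) * (p ξ + q ξ * Real.sqrt (ξ ^ 4 - 1))) / r ξ < 0 := by
  refine ⟨r_pos, ?_⟩
  apply div_neg_of_neg_of_pos _ r_pos
  have hw : 0 ≤ Real.sqrt (ξ ^ 4 - 1) := Real.sqrt_nonneg _
  have h1 : (0 : ℝ) < 1 + ξ ^ 2 := by positivity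
  have h2 : 0 < p ξ + q ξ * Real.sqrt (ξ ^ 4 - 1) := by
    have := mul_nonneg q_pos.le hw
    nlinarith [p_pos]
  nlinarith
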